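/- Let (x_t) be a sequence in E, (y_t) a sequence in F, and (L_t) positive reals. Suppose for every t: the gradient of the map x ↦ f(x, y_t) is Lipschitz continuous with constant L_t; x_{t+1} is a global minimizer of x ↦ f(x, y_t); y_{t+1} satisfies f(x_{t+1}, y_{t+1}) ≤ f(x_{t+1}, y_t) and ∇_y f(x_t, y_t) = 0. Then for every T ≥ 1, the sum over t = 0, …, T−1 of (1/(2·L_t))·‖∇ f(x_t, y_t)‖² is at most f(x_0, y_0) − f(x_T, y_T), and consequently min over t ∈ {0,…,T−1} of ‖∇ f(x_t, y_t)‖² ≤ 2·L*·(f(x_0,y_0) − f(x_T,y_T))/T where L* = max of L_t over t = 0, …, T−1. -/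

import Mathlib

/-!
Exact minimisation in `x` does at least as well as a gradient step of length `1 / Lₜ` from `xₜ`,
which by the descent lemma for an `Lₜ`-Lipschitz gradient lowers `f (·, yₜ)` by
`‖∇ₓ f (xₜ, yₜ)‖² / (2 Lₜ)`; the `y`-update does not increase `f`, and `∇_y f (xₜ, yₜ) = 0`, so this
decrease is `‖∇ f (xₜ, yₜ)‖² / (2 Lₜ)`. Telescoping gives the summed inequality, and bounding every
`Lₜ` by their maximum and every squared gradient norm from below by their minimum gives the rate.
-/

open RealInnerProductSpace Finset
open scoped Gradient

section Descent

variable {E : Type*} [NormedAddCommGroup E] [InnerProductSpace ℝ E] [CompleteSpace E]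
  {g : E → ℝ} {L : ℝ}

theorem hasDerivAt_comp_add_smul (hg : Differentiable ℝ g) (a v : E) (t : ℝ) :
    HasDerivAt (fun s : ℝ => g (a + s • v)) ⟪∇ g (a + t • v), v⟫ t := by
  have hline : HasDerivAt (fun s : ℝ => a + s • v) v t := by
    simpa using ((hasDerivAt_id t).smul_const v).const_add a
  simpa [Function.comp_def] using
    (hg (a + t • v)).hasGradientAt.hasFDerivAt.comp_hasDerivAt t hline

theorem inner_gradient_add_smul_sub_le
    (hlip : ∀ a b : E, ‖∇ g b - ∇ g a‖ ≤ L * ‖b - a‖) (a v : E) {t : ℝ} (ht : 0 ≤ t) :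
    ⟪∇ g (a + t • v) - ∇ g a, v⟫ ≤ L * t * ‖v‖ ^ 2 :=
  calc ⟪∇ g (a + t • v) - ∇ g a, v⟫
      ≤ ‖∇ g (a + t • v) - ∇ g a‖ * ‖v‖ := real_inner_le_norm _ _
    _ ≤ L * ‖(a + t • v) - a‖ * ‖v‖ := by gcongr; exact hlip _ _
    _ = L * t * ‖v‖ ^ 2 := by
      rw [add_sub_cancel_left, norm_smul, Real.norm_of_nonneg ht]; ring

theorem le_add_inner_gradient_add_sq_norm (hg : Differentiable ℝ g)
    (hlip : ∀ a b : E, ‖∇ g b - ∇ g a‖ ≤ L * ‖b - a‖) (a v : E) :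
    g (a + v) ≤ g a + ⟪∇ g a, v⟫ + L / 2 * ‖v‖ ^ 2 := by
  set ψ : ℝ → ℝ := fun t => g (a + t • v) - t * ⟪∇ g a, v⟫ - L / 2 * ‖v‖ ^ 2 * t ^ 2
  have hψ : ∀ t, HasDerivAt ψ (⟪∇ g (a + t • v) - ∇ g a, v⟫ - L * t * ‖v‖ ^ 2) t := by
    intro t
    refine (((hasDerivAt_comp_add_smul hg a v t).sub (hasDerivAt_mul_const _)).sub
      ((hasDerivAt_pow 2 t).const_mul (L / 2 * ‖v‖ ^ 2))).congr_deriv ?_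
    rw [inner_sub_left]; ring
  have hanti : AntitoneOn ψ (Set.Icc 0 1) := by
    refine antitoneOn_of_hasDerivWithinAt_nonpos (convex_Icc 0 1)
      (fun t _ => (hψ t).continuousAt.continuousWithinAt) (fun t _ => (hψ t).hasDerivWithinAt) ?_
    intro t ht
    rw [interior_Icc] at ht
    linarith [inner_gradient_add_smul_sub_le hlip a v ht.1.le]
  have h01 : ψ 1 ≤ ψ 0 := hanti (by simp) (by simp) zero_le_one
  simp only [ψ, one_smul, zero_smul, add_zero, one_mul, one_pow, zero_mul, sub_zero, mul_one,
    ne_eq, OfNat.ofNat_ne_zero, not_false_eq_true, zero_pow, mul_zero] at h01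
  linarith

theorem le_sub_sq_norm_gradient_of_forall_le (hg : Differentiable ℝ g) (hL : 0 < L)
    (hlip : ∀ a b : E, ‖∇ g b - ∇ g a‖ ≤ L * ‖b - a‖) {m : E} (hmin : ∀ z, g m ≤ g z) (a : E) :
    g m ≤ g a - 1 / (2 * L) * ‖∇ g a‖ ^ 2 :=
  calc g m ≤ g (a + -(1 / L) • ∇ g a) := hmin _
    _ ≤ g a + ⟪∇ g a, -(1 / L) • ∇ g a⟫ + L / 2 * ‖-(1 / L) • ∇ g a‖ ^ 2 :=
      le_add_inner_gradient_add_sq_norm hg hlip _ _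
    _ = g a - 1 / (2 * L) * ‖∇ g a‖ ^ 2 := by
      rw [real_inner_smul_right, real_inner_self_eq_norm_sq, norm_smul, mul_pow,
        Real.norm_eq_abs, sq_abs]
      field_simp
      ring

end Descent

theorem sum_range_le_sub_of_le_sub {u a : ℕ → ℝ} (h : ∀ t, u (t + 1) ≤ u t - a t) (T : ℕ) :
    ∑ t ∈ range T, a t ≤ u 0 - u T :=
  (sum_le_sum fun t _ => by linarith [h t]).trans_eq (sum_range_sub' u T)

theorem inf'_le_mul_sup'_div_card_of_sum_le {ι : Type*} {s : Finset ι} (hs : s.Nonempty)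
    {G L : ι → ℝ} {D : ℝ} (hL : ∀ t ∈ s, 0 < L t) (hG : ∀ t ∈ s, 0 ≤ G t)
    (hsum : ∑ t ∈ s, 1 / (2 * L t) * G t ≤ D) :
    s.inf' hs G ≤ 2 * s.sup' hs L * D / #s := by
  set m := s.inf' hs G
  set Lmax := s.sup' hs L
  obtain ⟨t₀, ht₀⟩ := hs
  have hLmax : 0 < Lmax := (hL t₀ ht₀).trans_le (le_sup' L ht₀)
  have hterm : ∀ t ∈ s, m / (2 * Lmax) ≤ 1 / (2 * L t) * G t := fun t ht =>
    calc m / (2 * Lmax) ≤ G t / (2 * Lmax) := by gcongr; exact inf'_le G ht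
      _ ≤ G t / (2 * L t) := by
        gcongr
        · exact hG t ht
        · exact mul_pos two_pos (hL t ht)
        · exact le_sup' L ht
      _ = 1 / (2 * L t) * G t := by ring
  have hcard : #s * (m / (2 * Lmax)) ≤ D := by
    simpa using (sum_le_sum hterm).trans hsum
  rw [le_div_iff₀ (by exact_mod_cast card_pos.mpr ⟨t₀, ht₀⟩)]
  calc m * #s = 2 * Lmax * (#s * (m / (2 * Lmax))) := by field_simp
    _ ≤ 2 * Lmax * D := by gcongr

/-- Theorem 1 combined with the Corollary: two-block coordinate descent
with exact minimization in the `x`-block, under per-block Lipschitz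
constants `Lₜ`, has the summed descent inequality and the O(1/√T) rate. -/
theorem two_block_exact_min_rate
    {E F : Type*} [NormedAddCommGroup E] [InnerProductSpace ℝ E] [CompleteSpace E]
    [NormedAddCommGroup F] [InnerProductSpace ℝ F] [CompleteSpace F]
    (f : E × F → ℝ) (hf : Differentiable ℝ f)
    (x : ℕ → E) (y : ℕ → F) (L : ℕ → ℝ) (hL : ∀ t, 0 < L t)
    (hlip : ∀ t, ∀ a b : E,
      ‖gradient (fun x' => f (x', y t)) b - gradient (fun x' => f (x', y t)) a‖ ≤
        L t * ‖b - a‖)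
    (hxmin : ∀ t, ∀ z : E, f (x (t + 1), y t) ≤ f (z, y t))
    (hy : ∀ t, f (x (t + 1), y (t + 1)) ≤ f (x (t + 1), y t))
    (h1 : ∀ t, gradient (fun y' => f (x t, y')) (y t) = 0) :
    ∀ T : ℕ, ∀ hT : 1 ≤ T,
      (∑ t ∈ Finset.range T,
          (1 / (2 * L t)) *
            (‖gradient (fun x' => f (x', y t)) (x t)‖ ^ 2 +
              ‖gradient (fun y' => f (x t, y')) (y t)‖ ^ 2) ≤
        f (x 0, y 0) - f (x T, y T)) ∧
      (Finset.range T).inf' (Finset.nonempty_range_iff.mpr (by omega))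
          (fun t =>
            ‖gradient (fun x' => f (x', y t)) (x t)‖ ^ 2 +
              ‖gradient (fun y' => f (x t, y')) (y t)‖ ^ 2) ≤
        2 * ((Finset.range T).sup' (Finset.nonempty_range_iff.mpr (by omega)) L) *
          (f (x 0, y 0) - f (x T, y T)) / T := by
  intro T hT
  have hstep : ∀ t, f (x (t + 1), y (t + 1)) ≤ f (x t, y t) - 1 / (2 * L t) *
      (‖∇ (fun x' => f (x', y t)) (x t)‖ ^ 2 + ‖∇ (fun y' => f (x t, y')) (y t)‖ ^ 2) := by
    intro t
    rw [h1 t, norm_zero, zero_pow two_ne_zero, add_zero]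
    exact (hy t).trans (le_sub_sq_norm_gradient_of_forall_le (by fun_prop) (hL t) (hlip t)
      (hxmin t) (x t))
  have hsum := sum_range_le_sub_of_le_sub (u := fun t => f (x t, y t)) hstep T
  refine ⟨hsum, ?_⟩
  have hrate := inf'_le_mul_sup'_div_card_of_sum_le (nonempty_range_iff.mpr (by omega))
    (fun t _ => hL t) (fun t _ => by positivity) hsum
  rwa [card_range] at hrate
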